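/- arXiv:1711.07435 — 7 statements merged into one kernel-verified Lean document; each statement's English description precedes it below -/
import Mathlib

section
/- If M is a doubly stochastic matrix that is diagonalizable with all eigenvalues other than the eigenvalue 1 (with the uniform vector as eigenvector) having modulus strictly less than 1, and the eigenspace of 1 is one-dimensional, then for every probability vector P, the iterates Mⁿ·P converge to the uniform probability vector (1/n, ..., 1/n) as n → ∞. -/
/-!
Write `Mc = Q D Q⁻¹` with `D` diagonal. Each diagonal entry of `D` is an eigenvalue (the
corresponding column of `Q` is an eigenvector), so it is `1` or has modulus `< 1`, and the powers
`Dᵐ`, hence `Mᵐ`, converge. The limit `w` of `Mᵐ P` is fixed by `M`, so it is constant; since the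
column sums of `M` are `1`, every `Mᵐ P` has total mass `∑ P = 1`, and so has `w`, which forces
the constant to be `1 / n`.
-/

open Matrix Filter Topology

namespace Matrix

variable {ι : Type*} [Fintype ι]

theorem sum_mulVec_of_sum_col {R : Type*} [Semiring R] {A : Matrix ι ι R}
    (hcol : ∀ j, ∑ i, A i j = 1) (v : ι → R) : ∑ i, (A *ᵥ v) i = ∑ i, v i := by
  simp only [mulVec, dotProduct]
  rw [Finset.sum_comm]
  simp only [← Finset.sum_mul, hcol, one_mul]

variable [DecidableEq ι]

theorem sum_pow_mulVec_of_sum_col {R : Type*} [Semiring R] {A : Matrix ι ι R}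
    (hcol : ∀ j, ∑ i, A i j = 1) (v : ι → R) (m : ℕ) : ∑ i, (A ^ m *ᵥ v) i = ∑ i, v i := by
  induction m with
  | zero => simp
  | succ m ih => rw [pow_succ', ← mulVec_mulVec, sum_mulVec_of_sum_col hcol, ih]

theorem mulVec_eq_self_of_tendsto_pow_mulVec {R : Type*} [Semiring R] [TopologicalSpace R]
    [IsTopologicalSemiring R] [T2Space R] {A : Matrix ι ι R} {v w : ι → R}
    (h : Tendsto (fun m : ℕ => A ^ m *ᵥ v) atTop (𝓝 w)) : A *ᵥ w = w := by
  have hA : Tendsto (fun m => A *ᵥ (A ^ m *ᵥ v)) atTop (𝓝 (A *ᵥ w)) :=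
    ((continuous_const.matrix_mulVec continuous_id).tendsto w).comp h
  have hshift : Tendsto (fun m => A ^ (m + 1) *ᵥ v) atTop (𝓝 w) :=
    (tendsto_add_atTop_iff_nat 1).2 h
  simp only [pow_succ', ← mulVec_mulVec] at hshift
  exact tendsto_nhds_unique hA hshift

theorem eq_const_of_tendsto_pow_mulVec {K : Type*} [Field K] [CharZero K] [TopologicalSpace K]
    [IsTopologicalRing K] [T2Space K] {A : Matrix ι ι K} (hcol : ∀ j, ∑ i, A i j = 1)
    (hfix : ∀ u : ι → K, A *ᵥ u = u → ∃ c, u = fun _ => c) {v w : ι → K}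
    (h : Tendsto (fun m : ℕ => A ^ m *ᵥ v) atTop (𝓝 w)) :
    w = fun _ => (∑ i, v i) / Fintype.card ι := by
  obtain ⟨c, rfl⟩ := hfix w (mulVec_eq_self_of_tendsto_pow_mulVec h)
  have hsum : ∑ i, v i = ∑ _ : ι, c := by
    refine tendsto_nhds_unique ?_ (tendsto_finsetSum _ fun i _ => tendsto_pi_nhds.1 h i)
    simp only [sum_pow_mulVec_of_sum_col hcol]
    exact tendsto_const_nhds
  funext i
  have : Nonempty ι := ⟨i⟩
  have : (Fintype.card ι : K) ≠ 0 := Nat.cast_ne_zero.2 Fintype.card_ne_zero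
  rw [hsum, Finset.sum_const, Finset.card_univ, nsmul_eq_mul]
  field_simp

section Conjugation

variable {R : Type*} [CommRing R] {A Q : Matrix ι ι R}

theorem eq_mul_conj_mul_inv (hQ : IsUnit Q.det) : A = Q * (Q⁻¹ * A * Q) * Q⁻¹ := by
  simp only [Matrix.mul_assoc, mul_nonsing_inv Q hQ, Matrix.mul_one]
  rw [← Matrix.mul_assoc, mul_nonsing_inv Q hQ, Matrix.one_mul]

theorem col_ne_zero_of_isUnit_det [Nontrivial R] (hQ : IsUnit Q.det) (k : ι) : Q.col k ≠ 0 := by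
  intro h
  have := congrArg (Q⁻¹ *ᵥ ·) h
  simp only [← mulVec_single_one, mulVec_mulVec, nonsing_inv_mul Q hQ, one_mulVec,
    mulVec_zero] at this
  exact one_ne_zero (α := R) (by simpa using congrFun this k)

theorem mulVec_col_of_isDiag_conj (hQ : IsUnit Q.det) (hD : (Q⁻¹ * A * Q).IsDiag) (k : ι) :
    A *ᵥ Q.col k = (Q⁻¹ * A * Q) k k • Q.col k := by
  conv_lhs => rw [eq_mul_conj_mul_inv (A := A) hQ, ← hD.diagonal_diag]
  rw [← mulVec_single_one, mulVec_mulVec, Matrix.mul_assoc, nonsing_inv_mul Q hQ, Matrix.mul_one,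
    ← mulVec_mulVec, diagonal_mulVec_single, ← smul_eq_mul, Pi.single_smul, mulVec_smul]
  rfl

theorem exists_tendsto_pow_of_isDiag_conj [TopologicalSpace R] [IsTopologicalRing R]
    (hQ : IsUnit Q.det) (hD : (Q⁻¹ * A * Q).IsDiag)
    (hconv : ∀ k, ∃ y, Tendsto (fun m : ℕ => (Q⁻¹ * A * Q) k k ^ m) atTop (𝓝 y)) :
    ∃ L, Tendsto (fun m : ℕ => A ^ m) atTop (𝓝 L) := by
  choose y hy using hconv
  have hpow (m : ℕ) : A ^ m = Q * diagonal ((Q⁻¹ * A * Q).diag ^ m) * Q⁻¹ := by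
    rw [← diagonal_pow, hD.diagonal_diag]
    conv_lhs => rw [eq_mul_conj_mul_inv (A := A) hQ]
    exact Units.conj_pow (nonsingInvUnit Q hQ) _ m
  have hdiag : Tendsto (fun m => diagonal ((Q⁻¹ * A * Q).diag ^ m)) atTop (𝓝 (diagonal y)) :=
    (continuous_id.matrix_diagonal.tendsto _).comp (tendsto_pi_nhds.2 hy)
  exact ⟨_, by simpa only [hpow] using (tendsto_const_nhds.mul hdiag).mul tendsto_const_nhds⟩

end Conjugation

end Matrix

theorem exists_tendsto_pow_of_eq_one_or_norm_lt_one {R : Type*} [SeminormedRing R] {x : R}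
    (hx : x = 1 ∨ ‖x‖ < 1) : ∃ y, Tendsto (fun m : ℕ => x ^ m) atTop (𝓝 y) := by
  rcases hx with rfl | hx
  · exact ⟨1, by simpa using tendsto_const_nhds⟩
  · exact ⟨0, tendsto_pow_atTop_nhds_zero_of_norm_lt_one hx⟩

theorem tendsto_of_tendsto_ofReal {α ι : Type*} {l : Filter α} {f : α → ι → ℝ} {x : ι → ℝ}
    (h : Tendsto (fun a i => (f a i : ℂ)) l (𝓝 fun i => (x i : ℂ))) : Tendsto f l (𝓝 x) := by
  have hre : Continuous fun (z : ι → ℂ) i => (z i).re :=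
    continuous_pi fun i => Complex.continuous_re.comp (continuous_apply i)
  simpa [Function.comp_def] using (hre.tendsto _).comp h

theorem doublyStochastic_mixing_general (n : ℕ) (M : Matrix (Fin n) (Fin n) ℝ)
    (hcol : ∀ j, ∑ i, M i j = 1)
    (Mc : Matrix (Fin n) (Fin n) ℂ) (hMc : Mc = M.map (algebraMap ℝ ℂ))
    -- `M` is diagonalizable over ℂ
    (hdiag : ∃ Q : Matrix (Fin n) (Fin n) ℂ, IsUnit Q.det ∧ (Q⁻¹ * Mc * Q).IsDiag)
    -- the eigenspace of the eigenvalue 1 is one-dimensional, spanned by the uniform vector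
    (hfix : ∀ v : Fin n → ℂ, Mc.mulVec v = v → ∃ c : ℂ, v = fun _ => c)
    -- every eigenvalue other than 1 has modulus strictly less than 1
    (hgap : ∀ lam : ℂ, lam ≠ 1 → (∃ v : Fin n → ℂ, v ≠ 0 ∧ Mc.mulVec v = lam • v) →
      ‖lam‖ < 1)
    (P : Fin n → ℝ) (hPsum : ∑ i, P i = 1) :
    Tendsto (fun m : ℕ => (M ^ m).mulVec P) atTop (nhds fun _ => (1 : ℝ) / n) := by
  obtain ⟨Q, hQ, hD⟩ := hdiag
  have hconv (k : Fin n) : ∃ y, Tendsto (fun m : ℕ => (Q⁻¹ * Mc * Q) k k ^ m) atTop (𝓝 y) :=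
    exists_tendsto_pow_of_eq_one_or_norm_lt_one <| or_iff_not_imp_left.2 fun h1 =>
      hgap _ h1 ⟨Q.col k, col_ne_zero_of_isUnit_det hQ k, mulVec_col_of_isDiag_conj hQ hD k⟩
  obtain ⟨L, hL⟩ := exists_tendsto_pow_of_isDiag_conj hQ hD hconv
  have hcolc (j : Fin n) : ∑ i, Mc i j = 1 := by
    simpa [hMc] using congrArg Complex.ofReal (hcol j)
  have hlim : Tendsto (fun m : ℕ => Mc ^ m *ᵥ fun i => (P i : ℂ)) atTop
      (𝓝 (L *ᵥ fun i => (P i : ℂ))) :=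
    ((continuous_id.matrix_mulVec continuous_const).tendsto L).comp hL
  rw [eq_const_of_tendsto_pow_mulVec hcolc hfix hlim] at hlim
  refine tendsto_of_tendsto_ofReal ?_
  convert hlim using 2 with m
  · funext i
    rw [hMc, ← Matrix.map_pow]
    exact RingHom.map_mulVec (algebraMap ℝ ℂ) (M ^ m) P i
  · simp [← Complex.ofReal_sum, hPsum]

/-- A doubly stochastic matrix that is diagonalizable over ℂ, whose eigenspace of the
eigenvalue 1 is spanned by the uniform vector and all of whose other eigenvalues have
modulus strictly less than 1, is mixing: `Mᵐ·P` converges to the uniform probability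
vector for every probability vector `P`. -/
theorem doublyStochastic_mixing (n : ℕ) (hn : 0 < n) (M : Matrix (Fin n) (Fin n) ℝ)
    (hMnonneg : ∀ i j, 0 ≤ M i j)
    (hrow : ∀ i, ∑ j, M i j = 1) (hcol : ∀ j, ∑ i, M i j = 1)
    (Mc : Matrix (Fin n) (Fin n) ℂ) (hMc : Mc = M.map (algebraMap ℝ ℂ))
    -- `M` is diagonalizable over ℂ
    (hdiag : ∃ Q : Matrix (Fin n) (Fin n) ℂ, IsUnit Q.det ∧ (Q⁻¹ * Mc * Q).IsDiag)
    -- the eigenspace of the eigenvalue 1 is one-dimensional, spanned by the uniform vector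
    (hfix : ∀ v : Fin n → ℂ, Mc.mulVec v = v → ∃ c : ℂ, v = fun _ => c)
    -- every eigenvalue other than 1 has modulus strictly less than 1
    (hgap : ∀ lam : ℂ, lam ≠ 1 → (∃ v : Fin n → ℂ, v ≠ 0 ∧ Mc.mulVec v = lam • v) →
      ‖lam‖ < 1)
    (P : Fin n → ℝ) (hPnonneg : ∀ i, 0 ≤ P i) (hPsum : ∑ i, P i = 1) :
    Tendsto (fun m : ℕ => (M ^ m).mulVec P) atTop (nhds fun _ => (1 : ℝ) / n) :=
  doublyStochastic_mixing_general n M hcol Mc hMc hdiag hfix hgap P hPsum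
end

section
/- For k > 0 with sin(k·l₁) ≠ 0 and sin(k·l₂) ≠ 0, the boundary value problem −f'' = k²f on (−l₁, 0) ∪ (0, l₂), with f(−l₁) = f(l₂) = 0, f continuous at 0 with value f₀, and f'(0⁺) − f'(0⁻) = α·f₀, has a nontrivial solution if and only if ζ_α(k) := α + k·cot(k·l₁) + k·cot(k·l₂) = 0 or f₀ = 0 with sin(k·l₁) = sin(k·l₂) = 0 simultaneously; in particular, if moreover f₀ ≠ 0 is required, nontrivial solutions exist iff ζ_α(k) = 0. -/
/-!
On each side of `0` a solution of `-f'' = k² f` is determined by its Cauchy data at any point,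
because the two Wronskians with `cos (k (x - x₀))` and `sin (k (x - x₀))` are constant.
A Dirichlet condition at the outer end therefore forces `f'(0⁻) = k cot (k l₁) f₀` and
`f'(0⁺) = -k cot (k l₂) f₀`, so the δ-condition reads `f₀ ζ_α(k) = 0`; and `f₀ = 0` would make both
pieces vanish identically since `sin (k lᵢ) ≠ 0`. Conversely, when `ζ_α(k) = 0` the pair
`sin (k l₂) sin (k (x + l₁))`, `sin (k l₁) sin (k (l₂ - x))` is a solution.
-/

open Real Set

def SolvesHelmholtzOn (k : ℝ) (f f' : ℝ → ℝ) (s : Set ℝ) : Prop :=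
  ∀ x ∈ s, HasDerivAt f (f' x) x ∧ HasDerivAt f' (-(k ^ 2) * f x) x

lemma Convex.eq_of_forall_hasDerivAt_zero {s : Set ℝ} (hs : Convex ℝ s) {W : ℝ → ℝ}
    (hW : ∀ x ∈ s, HasDerivAt W 0 x) {x y : ℝ} (hx : x ∈ s) (hy : y ∈ s) : W x = W y := by
  have := hs.norm_image_sub_le_of_norm_hasDerivWithin_le
    (fun z hz => (hW z hz).hasDerivWithinAt) (fun _ _ => norm_zero.le) hy hx
  rwa [zero_mul, norm_le_zero_iff, sub_eq_zero] at this

lemma hasDerivAt_sin_mul_sub (k x₀ x : ℝ) :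
    HasDerivAt (fun y => sin (k * (y - x₀))) (k * cos (k * (x - x₀))) x := by
  simpa [mul_comm] using (((hasDerivAt_id x).sub_const x₀).const_mul k).sin

lemma hasDerivAt_cos_mul_sub (k x₀ x : ℝ) :
    HasDerivAt (fun y => cos (k * (y - x₀))) (-(k * sin (k * (x - x₀)))) x := by
  simpa [mul_comm] using (((hasDerivAt_id x).sub_const x₀).const_mul k).cos

lemma solvesHelmholtzOn_const_mul_sin (k c a : ℝ) :
    SolvesHelmholtzOn k (fun x => c * sin (k * (x - a))) (fun x => c * k * cos (k * (x - a)))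
      univ :=
  fun x _ => ⟨((hasDerivAt_sin_mul_sub k a x).const_mul c).congr_deriv (by ring),
    ((hasDerivAt_cos_mul_sub k a x).const_mul (c * k)).congr_deriv (by ring)⟩

namespace SolvesHelmholtzOn

variable {k : ℝ} {f f' : ℝ → ℝ}

theorem eq_cos_add_sin {s : Set ℝ} (hf : SolvesHelmholtzOn k f f' s) (hs : Convex ℝ s)
    {x₀ x : ℝ} (hx₀ : x₀ ∈ s) (hx : x ∈ s) :
    k * f x = k * f x₀ * cos (k * (x - x₀)) + f' x₀ * sin (k * (x - x₀)) ∧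
      f' x = -(k * f x₀) * sin (k * (x - x₀)) + f' x₀ * cos (k * (x - x₀)) := by
  set C : ℝ → ℝ := fun y => cos (k * (y - x₀))
  set S : ℝ → ℝ := fun y => sin (k * (y - x₀))
  have hW₁ : ∀ y ∈ s, HasDerivAt (fun y => f y * (k * C y) - f' y * S y) 0 y := fun y hy =>
    (((hf y hy).1.mul ((hasDerivAt_cos_mul_sub k x₀ y).const_mul k)).sub
      ((hf y hy).2.mul (hasDerivAt_sin_mul_sub k x₀ y))).congr_deriv (by ring)
  have hW₂ : ∀ y ∈ s, HasDerivAt (fun y => -(f y * (k * S y)) - f' y * C y) 0 y := fun y hy =>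
    ((((hf y hy).1.mul ((hasDerivAt_sin_mul_sub k x₀ y).const_mul k)).neg).sub
      ((hf y hy).2.mul (hasDerivAt_cos_mul_sub k x₀ y))).congr_deriv (by ring)
  have e₁ := hs.eq_of_forall_hasDerivAt_zero hW₁ hx hx₀
  have e₂ := hs.eq_of_forall_hasDerivAt_zero hW₂ hx hx₀
  simp only [C, S, sub_self, mul_zero, sin_zero, cos_zero] at e₁ e₂
  have pyth := sin_sq_add_cos_sq (k * (x - x₀))
  constructor
  · linear_combination cos (k * (x - x₀)) * e₁ - sin (k * (x - x₀)) * e₂ - k * f x * pyth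
  · linear_combination -sin (k * (x - x₀)) * e₁ - cos (k * (x - x₀)) * e₂ - f' x * pyth

variable {a b : ℝ}

theorem eqOn_zero_of_dirichlet (hf : SolvesHelmholtzOn k f f' (Icc a b)) (hk : k ≠ 0)
    (hsin : sin (k * (b - a)) ≠ 0) (ha : f a = 0) (hb : f b = 0) : ∀ x ∈ Icc a b, f x = 0 := by
  intro x hx
  have hab : a ≤ b := hx.1.trans hx.2
  have ha' : a ∈ Icc a b := left_mem_Icc.2 hab
  have hf'a : f' a = 0 := by
    have := (hf.eq_cos_add_sin (convex_Icc a b) ha' (right_mem_Icc.2 hab)).1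
    rw [ha, hb] at this
    simpa [hsin] using this.symm
  have := (hf.eq_cos_add_sin (convex_Icc a b) ha' hx).1
  simpa [ha, hf'a, hk] using this

theorem deriv_at_right_of_dirichlet_left (hf : SolvesHelmholtzOn k f f' (Icc a b)) (hab : a ≤ b)
    (hsin : sin (k * (b - a)) ≠ 0) (ha : f a = 0) :
    f' b = k * (cos (k * (b - a)) / sin (k * (b - a))) * f b := by
  obtain ⟨hfb, hf'b⟩ :=
    hf.eq_cos_add_sin (convex_Icc a b) (left_mem_Icc.2 hab) (right_mem_Icc.2 hab)
  rw [ha] at hfb hf'b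
  field_simp
  linear_combination sin (k * (b - a)) * hf'b - cos (k * (b - a)) * hfb

theorem deriv_at_left_of_dirichlet_right (hf : SolvesHelmholtzOn k f f' (Icc a b)) (hab : a ≤ b)
    (hsin : sin (k * (b - a)) ≠ 0) (hb : f b = 0) :
    f' a = -(k * (cos (k * (b - a)) / sin (k * (b - a)))) * f a := by
  obtain ⟨hfa, hf'a⟩ :=
    hf.eq_cos_add_sin (convex_Icc a b) (right_mem_Icc.2 hab) (left_mem_Icc.2 hab)
  rw [hb, show a - b = -(b - a) by ring, mul_neg, sin_neg, cos_neg] at hfa hf'a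
  field_simp
  linear_combination sin (k * (b - a)) * hf'a + cos (k * (b - a)) * hfa

end SolvesHelmholtzOn

/-- For `k > 0` with `sin(k·l₁) ≠ 0 ≠ sin(k·l₂)`, the interval `[-l₁, l₂]` with
Dirichlet endpoints and a δ-coupling of strength `α` at `0` has a nontrivial
eigenfunction with eigenvalue `k²` if and only if the secular function
`ζ_α(k) = α + k·cot(k·l₁) + k·cot(k·l₂)` vanishes. -/
theorem interval_delta_secular_equation (l₁ l₂ α k : ℝ)
    (hl₁ : 0 < l₁) (hl₂ : 0 < l₂) (hk : 0 < k)
    (hs₁ : sin (k * l₁) ≠ 0) (hs₂ : sin (k * l₂) ≠ 0) :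
    (∃ fL fR fL' fR' : ℝ → ℝ,
      (∀ x ∈ Icc (-l₁) 0, HasDerivAt fL (fL' x) x) ∧
      (∀ x ∈ Icc (-l₁) 0, HasDerivAt fL' (-(k ^ 2) * fL x) x) ∧
      (∀ x ∈ Icc 0 l₂, HasDerivAt fR (fR' x) x) ∧
      (∀ x ∈ Icc 0 l₂, HasDerivAt fR' (-(k ^ 2) * fR x) x) ∧
      fL (-l₁) = 0 ∧ fR l₂ = 0 ∧ fL 0 = fR 0 ∧
      fR' 0 - fL' 0 = α * fL 0 ∧
      (¬(∀ x ∈ Icc (-l₁) 0, fL x = 0) ∨ ¬(∀ x ∈ Icc 0 l₂, fR x = 0)))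
    ↔ α + k * (cos (k * l₁) / sin (k * l₁)) + k * (cos (k * l₂) / sin (k * l₂)) = 0 := by
  have hL₁ : -l₁ ≤ 0 := by linarith
  have hsin₁ : sin (k * (0 - -l₁)) = sin (k * l₁) := by rw [zero_sub, neg_neg]
  have hsin₂ : sin (k * (l₂ - 0)) = sin (k * l₂) := by rw [sub_zero]
  constructor
  · rintro ⟨fL, fR, fL', fR', hL, hL', hR, hR', hfL, hfR, hcont, hjump, hnontrivial⟩
    have solL : SolvesHelmholtzOn k fL fL' (Icc (-l₁) 0) := fun x hx => ⟨hL x hx, hL' x hx⟩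
    have solR : SolvesHelmholtzOn k fR fR' (Icc 0 l₂) := fun x hx => ⟨hR x hx, hR' x hx⟩
    by_cases hf₀ : fL 0 = 0
    · refine (hnontrivial.elim (· ?_) (· ?_)).elim
      · exact solL.eqOn_zero_of_dirichlet hk.ne' (hsin₁ ▸ hs₁) hfL hf₀
      · exact solR.eqOn_zero_of_dirichlet hk.ne' (hsin₂ ▸ hs₂) (hcont ▸ hf₀) hfR
    · have hdL := solL.deriv_at_right_of_dirichlet_left hL₁ (hsin₁ ▸ hs₁) hfL
      have hdR := solR.deriv_at_left_of_dirichlet_right hl₂.le (hsin₂ ▸ hs₂) hfR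
      rw [zero_sub, neg_neg] at hdL
      rw [sub_zero, ← hcont] at hdR
      refine (mul_eq_zero.1 ?_).resolve_left hf₀
      linear_combination hdR - hdL - hjump
  · intro hζ
    refine ⟨fun x => sin (k * l₂) * sin (k * (x - -l₁)), fun x => -sin (k * l₁) * sin (k * (x - l₂)),
      fun x => sin (k * l₂) * k * cos (k * (x - -l₁)),
      fun x => -sin (k * l₁) * k * cos (k * (x - l₂)),
      fun x _ => (solvesHelmholtzOn_const_mul_sin _ _ _ x (mem_univ x)).1,
      fun x _ => (solvesHelmholtzOn_const_mul_sin _ _ _ x (mem_univ x)).2,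
      fun x _ => (solvesHelmholtzOn_const_mul_sin _ _ _ x (mem_univ x)).1,
      fun x _ => (solvesHelmholtzOn_const_mul_sin _ _ _ x (mem_univ x)).2,
      by simp, by simp, by simp [mul_comm], ?_, ?_⟩
    · simp only [zero_sub, sub_neg_eq_add, zero_add, mul_neg, cos_neg]
      field_simp at hζ
      linear_combination -hζ
    · exact .inl fun h => mul_ne_zero hs₂ hs₁ (by simpa using h 0 (right_mem_Icc.2 hL₁))
end

section
/- If the edge lengths l₁,…,l_E of a star graph are pairwise rationally independent (no two ratios lᵢ/lⱼ rational for i ≠ j), then every eigenvalue k² > 0 of the star graph (Dirichlet at the boundary, δ-coupling at the center) is simple: the space of solutions is at most one-dimensional. -/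
/-!
On an edge, a solution of `-u'' = k² u` is `u(0) cos (k x) + u'(0)/k · sin (k x)`. If
`sin (k lᵢ) = sin (k lⱼ) = 0` then `k lᵢ, k lⱼ ∈ πℤ` and `lᵢ / lⱼ` is rational, so rational
independence leaves at most one edge with `sin (k lᵢ) = 0`. It follows that an eigenfunction
vanishing at the centre vanishes identically. Hence `f(0) ≠ 0`, which in turn rules out
`sin (k lᵢ) = 0` on every edge; then `g - (g(0)/f(0)) f` vanishes at the centre and at the
boundary vertices, so on every edge its derivative at the centre vanishes, and with it the
whole function.
-/

open Real Set

structure IsHelmholtzSolutionOn (k L : ℝ) (u u' : ℝ → ℝ) : Prop where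
  hasDerivAt : ∀ x ∈ Icc 0 L, HasDerivAt u (u' x) x
  hasDerivAt_deriv : ∀ x ∈ Icc 0 L, HasDerivAt u' (-(k ^ 2) * u x) x

namespace IsHelmholtzSolutionOn

variable {k L : ℝ} {u u' v v' : ℝ → ℝ}

theorem sub (hv : IsHelmholtzSolutionOn k L v v') (hu : IsHelmholtzSolutionOn k L u u') :
    IsHelmholtzSolutionOn k L (v - u) (v' - u') where
  hasDerivAt x hx := (hv.hasDerivAt x hx).sub (hu.hasDerivAt x hx)
  hasDerivAt_deriv x hx := by
    refine ((hv.hasDerivAt_deriv x hx).sub (hu.hasDerivAt_deriv x hx)).congr_deriv ?_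
    simp only [Pi.sub_apply]
    ring

theorem const_mul (hu : IsHelmholtzSolutionOn k L u u') (c : ℝ) :
    IsHelmholtzSolutionOn k L (fun x => c * u x) (fun x => c * u' x) where
  hasDerivAt x hx := (hu.hasDerivAt x hx).const_mul c
  hasDerivAt_deriv x hx := by
    refine ((hu.hasDerivAt_deriv x hx).const_mul c).congr_deriv ?_
    ring

theorem cos_add_sin (hk : k ≠ 0) (a b : ℝ) :
    IsHelmholtzSolutionOn k L (fun x => a * cos (k * x) + b / k * sin (k * x))
      (fun x => -(a * k) * sin (k * x) + b * cos (k * x)) := by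
  have hkx (x : ℝ) : HasDerivAt (fun y => k * y) k x := by
    simpa using (hasDerivAt_id x).const_mul k
  constructor
  · intro x _
    refine (((hkx x).cos.const_mul a).add ((hkx x).sin.const_mul (b / k))).congr_deriv ?_
    field_simp
  · intro x _
    refine (((hkx x).sin.const_mul (-(a * k))).add ((hkx x).cos.const_mul b)).congr_deriv ?_
    field_simp
    ring

/-- The energy `(k u)² + u'²` is conserved. -/
theorem eqOn_zero (hu : IsHelmholtzSolutionOn k L u u') (hk : k ≠ 0) (h₀ : u 0 = 0)
    (h₀' : u' 0 = 0) : EqOn u 0 (Icc 0 L) := by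
  set energy : ℝ → ℝ := fun x => (k * u x) ^ 2 + u' x ^ 2
  have henergy : ∀ x ∈ Icc 0 L, HasDerivAt energy 0 x := by
    intro x hx
    refine ((((hu.hasDerivAt x hx).const_mul k).pow 2).add
      ((hu.hasDerivAt_deriv x hx).pow 2)).congr_deriv ?_
    ring
  have hconst := constant_of_has_deriv_right_zero
    (fun x hx => (henergy x hx).continuousAt.continuousWithinAt)
    (fun x hx => (henergy x (Ico_subset_Icc_self hx)).hasDerivWithinAt)
  intro x hx
  have hx0 : (k * u x) ^ 2 + u' x ^ 2 = 0 := by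
    simpa [energy, h₀, h₀'] using hconst x hx
  have : k * u x = 0 := by nlinarith [sq_nonneg (k * u x), sq_nonneg (u' x)]
  simpa [hk] using this

theorem eqOn_cos_add_sin (hu : IsHelmholtzSolutionOn k L u u') (hk : k ≠ 0) :
    EqOn u (fun x => u 0 * cos (k * x) + u' 0 / k * sin (k * x)) (Icc 0 L) := by
  intro x hx
  have := (hu.sub (cos_add_sin hk (u 0) (u' 0))).eqOn_zero hk (by simp) (by simp) hx
  simpa [sub_eq_zero] using this

theorem deriv_eq_zero_at_zero_of_sin_ne_zero (hu : IsHelmholtzSolutionOn k L u u') (hk : k ≠ 0)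
    (hL : 0 ≤ L) (h₀ : u 0 = 0) (hL₀ : u L = 0) (hsin : sin (k * L) ≠ 0) : u' 0 = 0 := by
  have := hu.eqOn_cos_add_sin hk ⟨hL, le_rfl⟩
  simp only [h₀, hL₀, zero_mul, zero_add] at this
  simpa [hk, hsin] using this.symm

theorem eq_zero_at_zero_of_sin_eq_zero (hu : IsHelmholtzSolutionOn k L u u') (hk : k ≠ 0)
    (hL : 0 ≤ L) (hL₀ : u L = 0) (hsin : sin (k * L) = 0) : u 0 = 0 := by
  have hcos : cos (k * L) ≠ 0 := by
    intro hcos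
    simpa [hsin, hcos] using sin_sq_add_cos_sq (k * L)
  have := hu.eqOn_cos_add_sin hk ⟨hL, le_rfl⟩
  simp only [hL₀, hsin, mul_zero, add_zero] at this
  simpa [hcos] using this.symm

end IsHelmholtzSolutionOn

theorem not_irrational_div_of_sin_mul_eq_zero {k a b : ℝ} (hk : k ≠ 0) (hb : b ≠ 0)
    (ha₀ : sin (k * a) = 0) (hb₀ : sin (k * b) = 0) : ¬Irrational (a / b) := by
  obtain ⟨n, hn⟩ := sin_eq_zero_iff.1 ha₀
  obtain ⟨m, hm⟩ := sin_eq_zero_iff.1 hb₀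
  have hm₀ : (m : ℝ) ≠ 0 := by
    rintro h
    simp [h, hk, hb] at hm
  refine fun h => h ⟨n / m, ?_⟩
  push_cast
  rw [div_eq_div_iff hm₀ hb]
  apply mul_left_cancel₀ hk
  linear_combination m * hn - n * hm

theorem subsingleton_sin_mul_eq_zero {ι : Type*} {k : ℝ} {l : ι → ℝ} (hk : k ≠ 0)
    (hl : ∀ i, l i ≠ 0) (hirr : ∀ i j, i ≠ j → Irrational (l i / l j)) :
    {i | sin (k * l i) = 0}.Subsingleton := by
  intro i hi j hj
  by_contra hij
  exact not_irrational_div_of_sin_mul_eq_zero hk (hl j) hi hj (hirr i j hij)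

/-- The Dirichlet condition gives `uᵢ'(0) = 0` on every edge with `sin (k lᵢ) ≠ 0`, and the
δ-condition then gives it on the remaining edge, if any. -/
theorem star_deriv_eq_zero_at_center {ι : Type*} [Fintype ι] {k : ℝ} {l : ι → ℝ}
    {u u' : ι → ℝ → ℝ} (hk : k ≠ 0) (hl : ∀ i, 0 ≤ l i)
    (hsin : {i | sin (k * l i) = 0}.Subsingleton)
    (hu : ∀ i, IsHelmholtzSolutionOn k (l i) (u i) (u' i)) (hD : ∀ i, u i (l i) = 0)
    (h₀ : ∀ i, u i 0 = 0) (hδ : ∑ i, u' i 0 = 0) (i : ι) : u' i 0 = 0 := by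
  have hne : ∀ j, sin (k * l j) ≠ 0 → u' j 0 = 0 := fun j hj =>
    (hu j).deriv_eq_zero_at_zero_of_sin_ne_zero hk (hl j) (h₀ j) (hD j) hj
  by_cases hi : sin (k * l i) = 0
  · refine (Finset.sum_eq_single_of_mem i (Finset.mem_univ i) ?_).symm.trans hδ
    exact fun j _ hji => hne j fun hj => hji (hsin hj hi)
  · exact hne i hi

theorem star_graph_simple_spectrum_general (E : ℕ) (l : Fin E → ℝ)
    (hl : ∀ i, 0 < l i) (hirr : ∀ i j, i ≠ j → Irrational (l i / l j))
    (α₀ k : ℝ) (hk : 0 < k)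
    (f f' g g' : Fin E → ℝ → ℝ) (f₀ g₀ : ℝ)
    (hf1 : ∀ i, ∀ x ∈ Icc 0 (l i), HasDerivAt (f i) (f' i x) x)
    (hf2 : ∀ i, ∀ x ∈ Icc 0 (l i), HasDerivAt (f' i) (-(k ^ 2) * f i x) x)
    (hfD : ∀ i, f i (l i) = 0) (hfc : ∀ i, f i 0 = f₀)
    (hfδ : ∑ i, f' i 0 = α₀ * f₀)
    (hg1 : ∀ i, ∀ x ∈ Icc 0 (l i), HasDerivAt (g i) (g' i x) x)
    (hg2 : ∀ i, ∀ x ∈ Icc 0 (l i), HasDerivAt (g' i) (-(k ^ 2) * g i x) x)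
    (hgD : ∀ i, g i (l i) = 0) (hgc : ∀ i, g i 0 = g₀)
    (hfnontriv : ¬∀ i, ∀ x ∈ Icc 0 (l i), f i x = 0) :
    ∃ c : ℝ, ∀ i, ∀ x ∈ Icc 0 (l i), g i x = c * f i x := by
  have hf (i) : IsHelmholtzSolutionOn k (l i) (f i) (f' i) := ⟨hf1 i, hf2 i⟩
  have hg (i) : IsHelmholtzSolutionOn k (l i) (g i) (g' i) := ⟨hg1 i, hg2 i⟩
  have hl₀ (i) : 0 ≤ l i := (hl i).le
  have hsin := subsingleton_sin_mul_eq_zero hk.ne' (fun i => (hl i).ne') hirr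
  have hf₀ : f₀ ≠ 0 := by
    rintro rfl
    refine hfnontriv fun i => (hf i).eqOn_zero hk.ne' (hfc i) ?_
    exact star_deriv_eq_zero_at_center hk.ne' hl₀ hsin hf hfD hfc (by simp [hfδ]) i
  refine ⟨g₀ / f₀, fun i => ?_⟩
  have hdiff := (hg i).sub ((hf i).const_mul (g₀ / f₀))
  have hsin_ne : sin (k * l i) ≠ 0 := fun h =>
    hf₀ (hfc i ▸ (hf i).eq_zero_at_zero_of_sin_eq_zero hk.ne' (hl₀ i) (hfD i) h)
  have hdiff₀ : (g i - fun x => g₀ / f₀ * f i x) 0 = 0 := by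
    simp [hgc, hfc, hf₀]
  have hdiffL : (g i - fun x => g₀ / f₀ * f i x) (l i) = 0 := by
    simp [hgD, hfD]
  intro x hx
  have := hdiff.eqOn_zero hk.ne' hdiff₀
    (hdiff.deriv_eq_zero_at_zero_of_sin_ne_zero hk.ne' (hl₀ i) hdiff₀ hdiffL hsin_ne) hx
  simpa [sub_eq_zero] using this

/-- If the edge lengths of a star graph are pairwise rationally independent, then every
positive eigenvalue of the star graph (Dirichlet boundary, δ-coupling at the center) is
simple: any two eigenfunctions for the same `k` are proportional. -/
theorem star_graph_simple_spectrum (E : ℕ) (hE : 0 < E) (l : Fin E → ℝ)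
    (hl : ∀ i, 0 < l i) (hirr : ∀ i j, i ≠ j → Irrational (l i / l j))
    (α₀ k : ℝ) (hk : 0 < k)
    (f f' g g' : Fin E → ℝ → ℝ) (f₀ g₀ : ℝ)
    (hf1 : ∀ i, ∀ x ∈ Icc 0 (l i), HasDerivAt (f i) (f' i x) x)
    (hf2 : ∀ i, ∀ x ∈ Icc 0 (l i), HasDerivAt (f' i) (-(k ^ 2) * f i x) x)
    (hfD : ∀ i, f i (l i) = 0) (hfc : ∀ i, f i 0 = f₀)
    (hfδ : ∑ i, f' i 0 = α₀ * f₀)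
    (hg1 : ∀ i, ∀ x ∈ Icc 0 (l i), HasDerivAt (g i) (g' i x) x)
    (hg2 : ∀ i, ∀ x ∈ Icc 0 (l i), HasDerivAt (g' i) (-(k ^ 2) * g i x) x)
    (hgD : ∀ i, g i (l i) = 0) (hgc : ∀ i, g i 0 = g₀)
    (hgδ : ∑ i, g' i 0 = α₀ * g₀)
    (hfnontriv : ¬∀ i, ∀ x ∈ Icc 0 (l i), f i x = 0) :
    ∃ c : ℝ, ∀ i, ∀ x ∈ Icc 0 (l i), g i x = c * f i x :=
  star_graph_simple_spectrum_general E l hl hirr α₀ k hk f f' g g' f₀ g₀ hf1 hf2 hfD hfc hfδ hg1 hg2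
    hgD hgc hfnontriv
end

section
/- For the interval [−l₁, l₂] with Dirichlet endpoints and attractive δ-potential α < 0 at 0, the function g(κ) := κ·coth(κ·l₁) + κ·coth(κ·l₂) is strictly increasing on (0,∞) with limit 1/l₁ + 1/l₂ as κ → 0⁺ and limit ∞ as κ → ∞; hence the equation g(κ) = −α has exactly one solution κ > 0 if −α > 1/l₁ + 1/l₂ and no solution if −α ≤ 1/l₁ + 1/l₂. -/
open Real Set Filter

lemma aux_sinh_lt (x : ℝ) (hx : 0 < x) : Real.sinh x < x * Real.cosh x := by
  have h : StrictMonoOn (fun t : ℝ => t * Real.cosh t - Real.sinh t) (Ici 0) := by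
    apply strictMonoOn_of_deriv_pos (convex_Ici 0)
    · fun_prop
    · intro t ht
      rw [interior_Ici] at ht
      have hd : HasDerivAt (fun t : ℝ => t * Real.cosh t - Real.sinh t) (t * Real.sinh t) t := by
        have : HasDerivAt (fun t : ℝ => t * Real.cosh t - Real.sinh t) (1 * Real.cosh t + t * Real.sinh t - Real.cosh t) t := ((hasDerivAt_id t).mul (Real.hasDerivAt_cosh t)).sub (Real.hasDerivAt_sinh t)
        convert this using 1
        ring
      rw [hd.deriv]
      exact mul_pos ht (Real.sinh_pos_iff.mpr ht)
  have := h (self_mem_Ici) (le_of_lt hx : (0:ℝ) ≤ x) hx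
  simpa using this

lemma aux_key {a b : ℝ} (ha : 0 < a) (hab : a < b) :
    b * Real.sinh a < a * Real.sinh b := by
  have h : StrictMonoOn (fun t : ℝ => Real.sinh t / t) (Ioi 0) := by
    apply strictMonoOn_of_deriv_pos (convex_Ioi 0)
    · exact Real.continuous_sinh.continuousOn.div continuousOn_id (fun t ht => ne_of_gt ht)
    · intro t ht
      rw [interior_Ioi] at ht
      have hd : HasDerivAt (fun t : ℝ => Real.sinh t / t)
          ((Real.cosh t * t - Real.sinh t * 1) / t ^ 2) t :=
        (Real.hasDerivAt_sinh t).div (hasDerivAt_id t) (ne_of_gt ht)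
      rw [hd.deriv]
      have := aux_sinh_lt t ht
      have h2 : (0:ℝ) < t ^ 2 := pow_pos ht 2
      apply div_pos (by nlinarith) h2
  have := h (mem_Ioi.mpr ha) (mem_Ioi.mpr (ha.trans hab)) hab
  rw [div_lt_div_iff₀ ha (ha.trans hab)] at this
  linarith

lemma aux_term_mono {l : ℝ} (hl : 0 < l) :
    StrictMonoOn (fun κ : ℝ => κ * (Real.cosh (κ * l) / Real.sinh (κ * l))) (Ioi 0) := by
  intro x hx y hy hxy
  simp only [mem_Ioi] at hx hy
  have sx : 0 < Real.sinh (x * l) := Real.sinh_pos_iff.mpr (by positivity)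
  have sy : 0 < Real.sinh (y * l) := Real.sinh_pos_iff.mpr (by positivity)
  simp only []
  rw [mul_div_assoc', mul_div_assoc', div_lt_div_iff₀ sx sy]
  have hS := Real.sinh_add (y * l) (x * l)
  have hT := Real.sinh_sub (y * l) (x * l)
  have key : ((x + y) * l) * Real.sinh ((y - x) * l) < ((y - x) * l) * Real.sinh ((x + y) * l) :=
    aux_key (mul_pos (by linarith) hl) (by nlinarith)
  have e1 : (y - x) * l = y * l - x * l := by ring
  have e2 : (x + y) * l = y * l + x * l := by ring
  rw [e1, e2] at key
  have key' : (x + y) * Real.sinh (y * l - x * l) < (y - x) * Real.sinh (y * l + x * l) := by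
    have hl' := hl
    nlinarith [key]
  nlinarith [hS, hT, key']

lemma aux_term_tendsto {l : ℝ} (hl : 0 < l) :
    Tendsto (fun κ : ℝ => κ * (Real.cosh (κ * l) / Real.sinh (κ * l)))
      (nhdsWithin 0 (Ioi 0)) (nhds (1 / l)) := by
  -- sinh x / x → 1 as x → 0, x ≠ 0
  have hslope : Tendsto (fun x : ℝ => Real.sinh x / x) (nhdsWithin 0 {0}ᶜ) (nhds 1) := by
    have := hasDerivAt_iff_tendsto_slope.mp (Real.hasDerivAt_sinh 0)
    rw [Real.cosh_zero] at this
    apply this.congr'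
    filter_upwards [self_mem_nhdsWithin] with x hx
    simp [slope_def_field, div_eq_div_iff]
  have hmap : Tendsto (fun κ : ℝ => κ * l) (nhdsWithin 0 (Ioi 0)) (nhdsWithin 0 {0}ᶜ) := by
    apply tendsto_nhdsWithin_of_tendsto_nhds_of_eventually_within
    · have : Tendsto (fun κ : ℝ => κ * l) (nhds 0) (nhds 0) := by
        simpa using (continuous_mul_right l).tendsto (0:ℝ)
      exact this.mono_left nhdsWithin_le_nhds
    · filter_upwards [self_mem_nhdsWithin] with κ hκ
      simp only [mem_compl_iff, mem_singleton_iff]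
      exact ne_of_gt (mul_pos hκ hl)
  have h1 : Tendsto (fun κ : ℝ => Real.sinh (κ * l) / (κ * l)) (nhdsWithin 0 (Ioi 0)) (nhds 1) :=
    hslope.comp hmap
  have h2 : Tendsto (fun κ : ℝ => (κ * l) / Real.sinh (κ * l)) (nhdsWithin 0 (Ioi 0)) (nhds 1) := by
    have := (h1.inv₀ one_ne_zero)
    rw [inv_one] at this
    apply this.congr
    intro κ
    rw [← one_div, one_div_div]
  have h3 : Tendsto (fun κ : ℝ => Real.cosh (κ * l)) (nhdsWithin 0 (Ioi 0)) (nhds 1) := by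
    have : Tendsto (fun κ : ℝ => Real.cosh (κ * l)) (nhds 0) (nhds 1) := by
      have hc : Continuous (fun κ : ℝ => Real.cosh (κ * l)) := by fun_prop
      have := hc.tendsto 0
      simpa using this
    exact this.mono_left nhdsWithin_le_nhds
  have h4 := (h3.mul h2).div_const l
  rw [one_mul] at h4
  apply h4.congr'
  filter_upwards [self_mem_nhdsWithin] with κ hκ
  have hκ' : (0:ℝ) < κ := hκ
  have s : Real.sinh (κ * l) ≠ 0 := ne_of_gt (Real.sinh_pos_iff.mpr (by positivity))
  field_simp

lemma aux_cont {l : ℝ} (hl : 0 < l) :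
    ContinuousOn (fun κ : ℝ => κ * (Real.cosh (κ * l) / Real.sinh (κ * l))) (Ioi 0) := by
  apply ContinuousOn.mul continuousOn_id
  apply ContinuousOn.div
  · fun_prop
  · fun_prop
  · intro κ hκ
    exact ne_of_gt (Real.sinh_pos_iff.mpr (mul_pos hκ hl))

/-- For the interval with Dirichlet endpoints and attractive δ-potential `α < 0` at `0`:
the function `g(κ) = κ·coth(κ·l₁) + κ·coth(κ·l₂)` is strictly increasing on `(0,∞)`,
tends to `1/l₁ + 1/l₂` as `κ → 0⁺` and to `∞` as `κ → ∞`; hence `g(κ) = -α` (the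
condition for a negative eigenvalue `-κ²`) has exactly one solution `κ > 0` if
`-α > 1/l₁ + 1/l₂` and none if `-α ≤ 1/l₁ + 1/l₂`. -/
theorem negative_eigenvalue_condition (l₁ l₂ α : ℝ) (hl₁ : 0 < l₁) (hl₂ : 0 < l₂)
    (hα : α < 0) (g : ℝ → ℝ)
    (hg : ∀ κ, g κ = κ * (cosh (κ * l₁) / sinh (κ * l₁))
      + κ * (cosh (κ * l₂) / sinh (κ * l₂))) :
    StrictMonoOn g (Ioi 0) ∧
    Tendsto g (nhdsWithin 0 (Ioi 0)) (nhds (1 / l₁ + 1 / l₂)) ∧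
    Tendsto g atTop atTop ∧
    (1 / l₁ + 1 / l₂ < -α → ∃! κ : ℝ, 0 < κ ∧ g κ = -α) ∧
    (-α ≤ 1 / l₁ + 1 / l₂ → ¬∃ κ : ℝ, 0 < κ ∧ g κ = -α) := by
  have hgfun : g = fun κ => κ * (cosh (κ * l₁) / sinh (κ * l₁))
      + κ * (cosh (κ * l₂) / sinh (κ * l₂)) := funext hg
  have hmono : StrictMonoOn g (Ioi 0) := by
    rw [hgfun]
    intro x hx y hy hxy
    exact add_lt_add (aux_term_mono hl₁ hx hy hxy) (aux_term_mono hl₂ hx hy hxy)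
  have hzero : Tendsto g (nhdsWithin 0 (Ioi 0)) (nhds (1 / l₁ + 1 / l₂)) := by
    rw [hgfun]
    exact (aux_term_tendsto hl₁).add (aux_term_tendsto hl₂)
  have htop : Tendsto g atTop atTop := by
    refine tendsto_atTop_mono' atTop ?_ tendsto_id
    filter_upwards [eventually_gt_atTop (0:ℝ)] with κ hκ
    show κ ≤ g κ
    rw [hg κ]
    have t1 : ∀ l : ℝ, 0 < l → κ ≤ κ * (cosh (κ * l) / sinh (κ * l)) := by
      intro l hl
      have s : 0 < Real.sinh (κ * l) := Real.sinh_pos_iff.mpr (mul_pos hκ hl)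
      have hc : Real.sinh (κ * l) < Real.cosh (κ * l) := by
        nlinarith [Real.cosh_sub_sinh (κ * l), Real.exp_pos (-(κ * l))]
      have : (1:ℝ) ≤ cosh (κ * l) / sinh (κ * l) := (one_le_div s).mpr hc.le
      nlinarith
    have := t1 l₁ hl₁
    have := t1 l₂ hl₂
    linarith
  have hcont : ContinuousOn g (Ioi 0) := by
    rw [hgfun]; exact (aux_cont hl₁).add (aux_cont hl₂)
  refine ⟨hmono, hzero, htop, ?_, ?_⟩
  · intro hL
    -- existence
    have h0 : ∀ᶠ κ in nhdsWithin 0 (Ioi 0), g κ < -α := hzero.eventually (Iio_mem_nhds hL)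
    obtain ⟨κ₀, hκ₀lt, hκ₀pos⟩ := (h0.and self_mem_nhdsWithin).exists
    have h1 : ∀ᶠ κ in atTop, -α < g κ ∧ κ₀ < κ :=
      (htop.eventually (eventually_gt_atTop (-α))).and (eventually_gt_atTop κ₀)
    obtain ⟨κ₁, hκ₁gt, hκ₀κ₁⟩ := h1.exists
    have hsub : Icc κ₀ κ₁ ⊆ Ioi 0 := fun t ht => lt_of_lt_of_le hκ₀pos ht.1
    have hIVT := intermediate_value_Icc hκ₀κ₁.le (hcont.mono hsub)
    have hmem : -α ∈ Icc (g κ₀) (g κ₁) := ⟨hκ₀lt.le, hκ₁gt.le⟩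
    obtain ⟨κ, hκmem, hκeq⟩ := hIVT hmem
    refine ⟨κ, ⟨lt_of_lt_of_le hκ₀pos hκmem.1, hκeq⟩, ?_⟩
    rintro κ' ⟨hκ'pos, hκ'eq⟩
    exact hmono.injOn hκ'pos (hsub hκmem) (hκ'eq.trans hκeq.symm)
  · rintro hL ⟨κ, hκpos, hκeq⟩
    have h2 : g (κ / 2) < g κ := hmono (by simpa using half_pos hκpos) hκpos (by linarith)
    have h3 : 1 / l₁ + 1 / l₂ ≤ g (κ / 2) := by
      apply le_of_tendsto hzero
      filter_upwards [self_mem_nhdsWithin,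
        Ioo_mem_nhdsGT_of_mem (Set.mem_Ico.mpr ⟨le_refl 0, half_pos hκpos⟩)] with t ht ht2
      exact (hmono ht (by simpa using half_pos hκpos) ht2.2).le
    rw [hκeq] at h2
    linarith
end

section
/- Let U be an M×M unitary matrix with eigenvalues e^{iθ_ℓ}, θ_ℓ ∈ (0, 2π). Then for real θ ∈ (0, 2π) with θ ≠ θ_ℓ for all ℓ, the counting function N(θ) = #{ℓ : θ_ℓ < θ} satisfies N(θ) = Mθ/(2π) − (1/π)·Im log det(1 − U) + (1/π)·Im log det(1 − e^{−iθ}U), where the branches of log det are chosen as Im log det(1 − zU) = ∑_ℓ Im Log(1 − z·e^{iθ_ℓ}) with Log the principal logarithm (for z = 1 interpreted as limit from |z| < 1). -/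
open Complex Matrix Finset Real

/-!
Since `1 - e^{ix} = 2 sin(x/2) e^{i(x-π)/2}` and `sin(x/2) > 0` for `x ∈ (0, 2π)`, the principal
branch gives `Im Log(1 - e^{ix}) = (x - π)/2` there. For `1 - e^{-iθ} e^{iθ_ℓ}` the phase
`θ_ℓ - θ` lies in `(-2π, 2π)`, and bringing it back into `(0, 2π)` costs a jump of `π` exactly
when `θ_ℓ < θ`. Summing over the spectrum, the linear terms produce `Mθ/(2π)` and the jumps
count the eigenphases below `θ`.
-/

namespace Complex

theorem one_sub_exp_mul_I (x : ℝ) :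
    1 - exp (x * I) = (2 * Real.sin (x / 2) : ℝ) * exp (((x - π) / 2 : ℝ) * I) := by
  have hx : (x : ℂ) * I = x / 2 * I + x / 2 * I := by ring
  have hπ : ((x - π : ℂ) / 2) * I = x / 2 * I + -(π / 2 * I) := by ring
  push_cast
  rw [hx, hπ, exp_add, exp_add, exp_neg, exp_pi_div_two_mul_I, Complex.sin, neg_mul, exp_neg]
  field_simp

theorem im_log_one_sub_exp_mul_I {x : ℝ} (hx : x ∈ Set.Ioo 0 (2 * π)) :
    (log (1 - exp (x * I))).im = (x - π) / 2 := by
  obtain ⟨hx0, hx2π⟩ := hx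
  have hsin : 0 < 2 * Real.sin (x / 2) :=
    mul_pos two_pos (Real.sin_pos_of_pos_of_lt_pi (by linarith) (by linarith))
  rw [log_im, one_sub_exp_mul_I, arg_real_mul _ hsin, arg_exp_mul_I,
    toIocMod_eq_self _ |>.mpr ⟨by linarith, by linarith⟩]

theorem im_log_one_sub_exp_mul_I_of_neg {x : ℝ} (hx : x ∈ Set.Ioo (-(2 * π)) 0) :
    (log (1 - exp (x * I))).im = (x + π) / 2 := by
  obtain ⟨hx2π, hx0⟩ := hx
  have hper : exp (((x + 2 * π : ℝ) : ℂ) * I) = exp (x * I) := by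
    push_cast
    exact exp_mul_I_periodic x
  have h := im_log_one_sub_exp_mul_I (x := x + 2 * π) ⟨by linarith, by linarith⟩
  rw [hper] at h
  linarith

theorem im_log_one_sub_exp_neg_mul_I_mul_exp_mul_I {φ θ : ℝ} (hφ : φ ∈ Set.Ioo 0 (2 * π))
    (hθ : θ ∈ Set.Ioo 0 (2 * π)) (hne : θ ≠ φ) :
    (log (1 - exp (-θ * I) * exp (φ * I))).im = (φ - θ - π) / 2 + if φ < θ then π else 0 := by
  obtain ⟨hφ0, hφ2π⟩ := hφ
  obtain ⟨hθ0, hθ2π⟩ := hθ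
  have hshift : exp (-θ * I) * exp (φ * I) = exp ((φ - θ : ℝ) * I) := by
    rw [← exp_add]
    push_cast
    ring_nf
  rw [hshift]
  rcases hne.lt_or_gt with hlt | hgt
  · rw [if_neg hlt.not_gt, add_zero, im_log_one_sub_exp_mul_I ⟨by linarith, by linarith⟩]
  · rw [if_pos hgt, im_log_one_sub_exp_mul_I_of_neg ⟨by linarith, by linarith⟩]
    ring

end Complex

theorem unitary_counting_trace_formula_general (M : ℕ)
    (θl : Fin M → ℝ) (hθl : ∀ ℓ, θl ℓ ∈ Set.Ioo 0 (2 * π))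
    (θ : ℝ) (hθ : θ ∈ Set.Ioo 0 (2 * π)) (hne : ∀ ℓ, θ ≠ θl ℓ) :
    ((univ.filter fun ℓ => θl ℓ < θ).card : ℝ) =
      M * θ / (2 * π)
      - (1 / π) * ∑ ℓ, (Complex.log (1 - exp (θl ℓ * I))).im
      + (1 / π) * ∑ ℓ, (Complex.log (1 - exp (-θ * I) * exp (θl ℓ * I))).im := by
  have hcount : ∑ ℓ, (if θl ℓ < θ then π else 0) = (univ.filter fun ℓ => θl ℓ < θ).card * π := by
    rw [sum_ite, sum_const, sum_const_zero, add_zero, nsmul_eq_mul]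
  have hlinear : ∑ ℓ, (θl ℓ - θ - π) / 2 = ∑ ℓ, (θl ℓ - π) / 2 - M * θ / 2 := by
    simp only [sub_right_comm _ θ, sub_div _ θ, sum_sub_distrib, sum_const, card_univ,
      Fintype.card_fin, nsmul_eq_mul]
    ring
  rw [sum_congr rfl fun ℓ _ => im_log_one_sub_exp_mul_I (hθl ℓ),
    sum_congr rfl fun ℓ _ => im_log_one_sub_exp_neg_mul_I_mul_exp_mul_I (hθl ℓ) hθ (hne ℓ),
    sum_add_distrib, hcount, hlinear]
  field_simp
  ring

/-- Trace formula for the eigenphase counting function of a unitary matrix `U` with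
eigenvalues `e^{iθ_ℓ}`, `θ_ℓ ∈ (0,2π)`: for `θ ∈ (0,2π)` distinct from all `θ_ℓ`,
`N(θ) = Mθ/(2π) - (1/π)·Im log det(1-U) + (1/π)·Im log det(1-e^{-iθ}U)`, where the
branch of `Im log det (1 - zU)` is `∑_ℓ Im Log(1 - z·e^{iθ_ℓ})` with the principal
logarithm. -/
theorem unitary_counting_trace_formula (M : ℕ)
    (U : Matrix (Fin M) (Fin M) ℂ) (hU : U ∈ Matrix.unitaryGroup (Fin M) ℂ)
    (θl : Fin M → ℝ) (hθl : ∀ ℓ, θl ℓ ∈ Set.Ioo 0 (2 * π))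
    (hspec : ∀ z : ℂ,
      ((1 : Matrix (Fin M) (Fin M) ℂ) - z • U).det = ∏ ℓ, (1 - z * exp (θl ℓ * I)))
    (θ : ℝ) (hθ : θ ∈ Set.Ioo 0 (2 * π)) (hne : ∀ ℓ, θ ≠ θl ℓ) :
    ((univ.filter fun ℓ => θl ℓ < θ).card : ℝ) =
      M * θ / (2 * π)
      - (1 / π) * ∑ ℓ, (Complex.log (1 - exp (θl ℓ * I))).im
      + (1 / π) * ∑ ℓ, (Complex.log (1 - exp (-θ * I) * exp (θl ℓ * I))).im :=
  unitary_counting_trace_formula_general M θl hθl θ hθ hne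
end

section
/- For a quantum graph in which all edges have equal length l, with Neumann (Kirchhoff) conditions at all vertices and sin(kl) ≠ 0, the vertex values vector f = (f₁,…,f_V) of an eigenfunction with eigenvalue k² satisfies A·f = cos(kl)·f, where A is the matrix with entries A_{ij} = C_{ij}/d_i (C the adjacency matrix, d_i the degree of vertex i); conversely, if A·f = cos(kl)·f for some nonzero f, then the edgewise functions f_{ij}(x) = (f_j·sin(kx) + f_i·sin(k(l−x)))/sin(kl) define an eigenfunction of the quantum graph. -/
open Real Set Finset

private lemma deriv_sin_rev (k l : ℝ) (x : ℝ) :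
    HasDerivAt (fun x => sin (k * (l - x))) (-k * cos (k * (l - x))) x := by
  have h1 : HasDerivAt (fun x : ℝ => k * (l - x)) (-k) x := by
    simpa using ((hasDerivAt_id x).const_sub l).const_mul k
  simpa [mul_comm, Function.comp_def] using (Real.hasDerivAt_sin (k * (l - x))).comp x h1

private lemma deriv_cos_rev (k l : ℝ) (x : ℝ) :
    HasDerivAt (fun x => cos (k * (l - x))) (k * sin (k * (l - x))) x := by
  have h1 : HasDerivAt (fun x : ℝ => k * (l - x)) (-k) x := by
    simpa using ((hasDerivAt_id x).const_sub l).const_mul k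
  simpa [mul_comm, Function.comp_def] using (Real.hasDerivAt_cos (k * (l - x))).comp x h1

private lemma deriv_sin_fwd (k : ℝ) (x : ℝ) :
    HasDerivAt (fun x => sin (k * x)) (k * cos (k * x)) x := by
  simpa [mul_comm, Function.comp_def] using (Real.hasDerivAt_sin (k * x)).comp x ((hasDerivAt_id x).const_mul k)

private lemma deriv_cos_fwd (k : ℝ) (x : ℝ) :
    HasDerivAt (fun x => cos (k * x)) (-(k * sin (k * x))) x := by
  simpa [mul_comm, Function.comp_def] using (Real.hasDerivAt_cos (k * x)).comp x ((hasDerivAt_id x).const_mul k)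

/-- Wronskian argument: a solution of `h'' = -k² h` on `[0,l]` has
`h'(0) = (h(l)·k - h(0)·k·cos(kl))/sin(kl)`. -/
private lemma ode_deriv_zero (k l : ℝ) (hl : 0 < l) (hsin : sin (k * l) ≠ 0)
    (h h' : ℝ → ℝ)
    (hd : ∀ x ∈ Icc (0:ℝ) l, HasDerivAt h (h' x) x)
    (hd2 : ∀ x ∈ Icc (0:ℝ) l, HasDerivAt h' (-(k ^ 2) * h x) x) :
    h' 0 = (h l * k - h 0 * k * cos (k * l)) / sin (k * l) := by
  set W : ℝ → ℝ := fun x => h x * (-k * cos (k * (l - x))) - h' x * sin (k * (l - x)) with hW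
  have hWd : ∀ x ∈ Icc (0:ℝ) l, HasDerivAt W 0 x := by
    intro x hx
    have h1 := (hd x hx).mul ((deriv_cos_rev k l x).const_mul (-k))
    have h2 := (hd2 x hx).mul (deriv_sin_rev k l x)
    have := h1.sub h2
    refine this.congr_deriv ?_
    ring
  have hWc : ∀ x ∈ Icc (0:ℝ) l, W x = W 0 := by
    apply constant_of_has_deriv_right_zero
    · exact fun x hx => ((hWd x hx).continuousAt).continuousWithinAt
    · exact fun x hx => ((hWd x (Ico_subset_Icc_self hx)).hasDerivWithinAt)
  have hl0 : W l = W 0 := hWc l (right_mem_Icc.2 hl.le)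
  simp only [hW, sub_self, mul_zero, Real.sin_zero, Real.cos_zero, sub_zero] at hl0
  field_simp
  nlinarith [hl0]

/-- For a quantum graph with all edge lengths equal to `l`, Neumann (Kirchhoff)
conditions at all vertices and `sin(kl) ≠ 0`: the vertex values of an eigenfunction
with eigenvalue `k²` satisfy `A·f = cos(kl)·f` with `A_{ij} = C_{ij}/d_i`; conversely,
any nonzero solution of `A·f = cos(kl)·f` defines an eigenfunction via
`f_{ij}(x) = (f_j·sin(kx) + f_i·sin(k(l-x)))/sin(kl)`. -/
theorem quantum_graph_to_discrete_graph (V : Type*) [Fintype V] [DecidableEq V]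
    (G : SimpleGraph V) [DecidableRel G.Adj] (hdeg : ∀ i, 1 ≤ G.degree i)
    (l k : ℝ) (hl : 0 < l) (hsin : sin (k * l) ≠ 0) :
    (∀ (F F' : V → V → ℝ → ℝ) (f : V → ℝ),
      (∀ i j, G.Adj i j → ∀ x ∈ Icc 0 l, HasDerivAt (F i j) (F' i j x) x) →
      (∀ i j, G.Adj i j → ∀ x ∈ Icc 0 l, HasDerivAt (F' i j) (-(k ^ 2) * F i j x) x) →
      (∀ i j, G.Adj i j → ∀ x ∈ Icc 0 l, F i j x = F j i (l - x)) →
      (∀ i j, G.Adj i j → F i j 0 = f i) →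
      (∀ i, ∑ j ∈ G.neighborFinset i, F' i j 0 = 0) →
      ∀ i, (∑ j ∈ G.neighborFinset i, f j) / (G.degree i : ℝ) = cos (k * l) * f i) ∧
    (∀ f : V → ℝ, f ≠ 0 →
      (∀ i, (∑ j ∈ G.neighborFinset i, f j) / (G.degree i : ℝ) = cos (k * l) * f i) →
      ∀ F F' : V → V → ℝ → ℝ,
      (∀ i j x, F i j x = (f j * sin (k * x) + f i * sin (k * (l - x))) / sin (k * l)) →
      (∀ i j x, F' i j x =
        (f j * k * cos (k * x) - f i * k * cos (k * (l - x))) / sin (k * l)) →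
      (∀ i j, G.Adj i j → ∀ x ∈ Icc 0 l, HasDerivAt (F i j) (F' i j x) x) ∧
      (∀ i j, G.Adj i j → ∀ x ∈ Icc 0 l, HasDerivAt (F' i j) (-(k ^ 2) * F i j x) x) ∧
      (∀ i j, G.Adj i j → F i j 0 = f i) ∧
      (∀ i, ∑ j ∈ G.neighborFinset i, F' i j 0 = 0)) := by
  have hk : k ≠ 0 := by
    rintro rfl
    simp at hsin
  constructor
  · -- forward direction
    intro F F' f hF hF'' hsym hF0 hKir i
    have hdne : (G.degree i : ℝ) ≠ 0 := by
      have := hdeg i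
      positivity
    have hval : ∀ j ∈ G.neighborFinset i,
        F' i j 0 = (f j * k - f i * k * cos (k * l)) / sin (k * l) := by
      intro j hj
      have hadj : G.Adj i j := (G.mem_neighborFinset i j).mp hj
      have hFl : F i j l = f j := by
        have := hsym i j hadj l (right_mem_Icc.2 hl.le)
        rw [this, sub_self, hF0 j i hadj.symm]
      have := ode_deriv_zero k l hl hsin (F i j) (F' i j)
        (hF i j hadj) (hF'' i j hadj)
      rw [this, hFl, hF0 i j hadj]
    have hsum : ∑ j ∈ G.neighborFinset i,
        (f j * k - f i * k * cos (k * l)) / sin (k * l) = 0 := by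
      rw [← hKir i]
      exact (Finset.sum_congr rfl hval).symm
    rw [← Finset.sum_div, Finset.sum_sub_distrib, Finset.sum_const, ← Finset.sum_mul,
      div_eq_zero_iff] at hsum
    have hnum : (∑ j ∈ G.neighborFinset i, f j) * k
        - (G.degree i : ℝ) * (f i * k * cos (k * l)) = 0 := by
      rcases hsum with h | h
      · rw [nsmul_eq_mul, SimpleGraph.card_neighborFinset_eq_degree] at h
        exact h
      · exact absurd h hsin
    rw [div_eq_iff hdne]
    have h2 : ((∑ j ∈ G.neighborFinset i, f j)
        - cos (k * l) * f i * (G.degree i : ℝ)) * k = 0 := by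
      linear_combination hnum
    have h3 := (mul_eq_zero.mp h2).resolve_right hk
    linarith
  · -- converse direction
    intro f hf0 heig F F' hFdef hF'def
    have hFfun : ∀ i j : V, F i j =
        fun x => (f j * sin (k * x) + f i * sin (k * (l - x))) / sin (k * l) :=
      fun i j => funext (hFdef i j)
    have hF'fun : ∀ i j : V, F' i j =
        fun x => (f j * k * cos (k * x) - f i * k * cos (k * (l - x))) / sin (k * l) :=
      fun i j => funext (hF'def i j)
    refine ⟨?_, ?_, ?_, ?_⟩
    · intro i j _ x _
      rw [hFfun, hF'def]
      have := (((deriv_sin_fwd k x).const_mul (f j)).add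
        ((deriv_sin_rev k l x).const_mul (f i))).div_const (sin (k * l))
      refine this.congr_deriv ?_
      ring
    · intro i j _ x _
      rw [hF'fun, hFdef]
      have := (((deriv_cos_fwd k x).const_mul (f j * k)).sub
        ((deriv_cos_rev k l x).const_mul (f i * k))).div_const (sin (k * l))
      refine this.congr_deriv ?_
      ring
    · intro i j _
      rw [hFdef]
      rw [mul_zero, Real.sin_zero, sub_zero]
      field_simp
      ring
    · intro i
      have hdne : (G.degree i : ℝ) ≠ 0 := by
        have := hdeg i
        positivity
      have hsum : (∑ j ∈ G.neighborFinset i, f j)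
          = cos (k * l) * f i * (G.degree i : ℝ) := by
        rw [← heig i, div_mul_cancel₀ _ hdne]
      calc ∑ j ∈ G.neighborFinset i, F' i j 0
          = ∑ j ∈ G.neighborFinset i,
            (f j * k - f i * k * cos (k * l)) / sin (k * l) := by
            refine Finset.sum_congr rfl fun j _ => ?_
            rw [hF'def, mul_zero, Real.cos_zero, sub_zero, mul_one]
        _ = ((∑ j ∈ G.neighborFinset i, f j) * k
              - (G.degree i : ℝ) * (f i * k * cos (k * l))) / sin (k * l) := by
            rw [← Finset.sum_div, Finset.sum_sub_distrib, Finset.sum_const, ← Finset.sum_mul,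
              nsmul_eq_mul, SimpleGraph.card_neighborFinset_eq_degree]
        _ = 0 := by
            rw [div_eq_zero_iff]
            left
            linear_combination k * hsum
end

section
/- If M is a doubly stochastic matrix, diagonalizable over ℂ, such that no eigenvalue other than 1 equals 1 and the eigenspace of 1 is spanned by the uniform vector, then for every probability vector P, the Cesàro averages (1/n)·∑_{m=1}^{n} Mᵐ·P converge to the uniform probability vector as n → ∞. -/
open Matrix Filter Finset

lemma cesaro_geom (l : ℂ) (hle : ‖l‖ ≤ 1) :
    Tendsto (fun N : ℕ => (1 / N : ℂ) * ∑ m ∈ Finset.Icc 1 N, l ^ m)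
      atTop (nhds (if l = 1 then 1 else 0)) := by
  by_cases h1 : l = 1
  · subst h1
    simp only [if_pos rfl]
    have heq : (fun _ : ℕ => (1:ℂ)) =ᶠ[atTop]
        fun N : ℕ => (1 / N : ℂ) * ∑ m ∈ Finset.Icc 1 N, (1:ℂ) ^ m := by
      filter_upwards [eventually_ge_atTop 1] with N hN
      have hN0 : (N : ℂ) ≠ 0 := by exact_mod_cast Nat.one_le_iff_ne_zero.mp hN
      simp [Nat.card_Icc, one_div, hN0]
    exact Tendsto.congr' heq tendsto_const_nhds
  · rw [if_neg h1]
    have hl1 : (0:ℝ) < ‖l - 1‖ := by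
      simpa using norm_pos_iff.mpr (sub_ne_zero.mpr h1)
    apply squeeze_zero_norm (a := fun N : ℕ => (2 / ‖l - 1‖) / N)
    · intro N
      have hsum : ∑ m ∈ Finset.Icc 1 N, l ^ m = l * ((l ^ N - 1) / (l - 1)) := by
        rw [← geom_sum_eq h1 N, Finset.mul_sum]
        rw [show Finset.Icc 1 N = Finset.map ⟨Nat.succ, Nat.succ_injective⟩ (Finset.range N) by
          ext x
          simp only [Finset.mem_Icc, Finset.mem_map, Finset.mem_range,
            Function.Embedding.coeFn_mk]
          constructor
          · rintro ⟨h1, h2⟩; exact ⟨x - 1, by omega, by omega⟩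
          · rintro ⟨a, ha, rfl⟩; omega]
        rw [Finset.sum_map]
        refine Finset.sum_congr rfl fun m _ => ?_
        show l ^ (m + 1) = l * l ^ m
        rw [pow_succ]; ring
      rw [hsum]
      have hnorm_eq : ‖(1 / N : ℂ) * (l * ((l ^ N - 1) / (l - 1)))‖
          = (1 / (N:ℝ)) * (‖l‖ * (‖(l ^ N - 1 : ℂ)‖ / ‖(l - 1 : ℂ)‖)) := by
        simp [norm_mul, norm_div]
      rw [hnorm_eq]
      have hlnorm : ‖l‖ ≤ 1 := hle
      have h2 : ‖(l ^ N - 1 : ℂ)‖ ≤ 2 := by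
        calc ‖(l ^ N - 1 : ℂ)‖ ≤ ‖l ^ N‖ + ‖(1:ℂ)‖ := norm_sub_le _ _
        _ ≤ 2 := by
          simp only [norm_pow, norm_one]
          have := pow_le_one₀ (norm_nonneg l) hle (n := N)
          linarith
      have hnn : (0:ℝ) ≤ 1 / (N:ℝ) := by positivity
      have key : ‖l‖ * (‖l ^ N - 1‖ / ‖l - 1‖) ≤ 2 / ‖l - 1‖ := by
        have h3 : ‖l ^ N - 1‖ / ‖l - 1‖ ≤ 2 / ‖l - 1‖ := by
          show _ ≤ 2 / ‖l - 1‖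
          gcongr
        calc ‖l‖ * (‖l ^ N - 1‖ / ‖l - 1‖) ≤ 1 * (‖l ^ N - 1‖ / ‖l - 1‖) := by
              apply mul_le_mul_of_nonneg_right hlnorm (by positivity)
        _ = ‖l ^ N - 1‖ / ‖l - 1‖ := one_mul _
        _ ≤ _ := h3
      calc (1 / (N:ℝ)) * (‖l‖ * (‖l ^ N - 1‖ / ‖l - 1‖))
          ≤ (1 / (N:ℝ)) * (2 / ‖l - 1‖) := by
            exact mul_le_mul_of_nonneg_left key hnn
      _ = 2 / ‖l - 1‖ / N := by ring
    · exact tendsto_const_div_atTop_nhds_zero_nat _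

/-- A doubly stochastic matrix, diagonalizable over ℂ, for which the eigenvalue `1`
has eigenspace spanned by the uniform vector (so no other eigenvalue equals `1`), is
ergodic: the Cesàro averages `(1/n)·∑_{m=1}^n Mᵐ·P` converge to the uniform
probability vector for every probability vector `P`. -/
theorem doublyStochastic_ergodic (n : ℕ) (hn : 0 < n) (M : Matrix (Fin n) (Fin n) ℝ)
    (hMnonneg : ∀ i j, 0 ≤ M i j)
    (hrow : ∀ i, ∑ j, M i j = 1) (hcol : ∀ j, ∑ i, M i j = 1)
    (Mc : Matrix (Fin n) (Fin n) ℂ) (hMc : Mc = M.map (algebraMap ℝ ℂ))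
    -- `M` is diagonalizable over ℂ
    (hdiag : ∃ Q : Matrix (Fin n) (Fin n) ℂ, IsUnit Q.det ∧ (Q⁻¹ * Mc * Q).IsDiag)
    -- the eigenspace of the eigenvalue 1 is spanned by the uniform vector;
    -- in particular no eigenvalue other than `λ₁ = 1` equals 1
    (hfix : ∀ v : Fin n → ℂ, Mc.mulVec v = v → ∃ c : ℂ, v = fun _ => c)
    (P : Fin n → ℝ) (hPnonneg : ∀ i, 0 ≤ P i) (hPsum : ∑ i, P i = 1) :
    Tendsto (fun m : ℕ => ((1 : ℝ) / m) • ∑ j ∈ Finset.Icc 1 m, (M ^ j).mulVec P)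
      atTop (nhds fun _ => (1 : ℝ) / n) := by
  obtain ⟨Q, hQ, hD⟩ := hdiag
  set d : Fin n → ℂ := fun i => (Q⁻¹ * Mc * Q) i i with hd
  have hDdiag : Q⁻¹ * Mc * Q = Matrix.diagonal d := (hD.diagonal_diag).symm
  have hQQ : Q * Q⁻¹ = 1 := Matrix.mul_nonsing_inv Q hQ
  have hQQ' : Q⁻¹ * Q = 1 := Matrix.nonsing_inv_mul Q hQ
  have hMcQ : Mc * Q = Q * Matrix.diagonal d := by
    calc Mc * Q = Q * (Q⁻¹ * Mc * Q) := by
          rw [show Q * (Q⁻¹ * Mc * Q) = (Q * Q⁻¹) * Mc * Q by noncomm_ring, hQQ, one_mul]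
    _ = Q * Matrix.diagonal d := by rw [hDdiag]
  have hMc_eq : Mc = Q * Matrix.diagonal d * Q⁻¹ := by
    calc Mc = Mc * Q * Q⁻¹ := by rw [mul_assoc, hQQ, mul_one]
    _ = Q * Matrix.diagonal d * Q⁻¹ := by rw [hMcQ]
  have hMcpow : ∀ m : ℕ, Mc ^ m = Q * Matrix.diagonal (fun k => d k ^ m) * Q⁻¹ := by
    intro m
    induction m with
    | zero =>
      have h0 : (Matrix.diagonal fun k => d k ^ 0) = (1 : Matrix (Fin n) (Fin n) ℂ) := by
        simp [Matrix.diagonal_one]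
      rw [pow_zero, h0, mul_one, hQQ]
    | succ m ih =>
      rw [pow_succ, ih, hMc_eq]
      calc Q * Matrix.diagonal (fun k => d k ^ m) * Q⁻¹ * (Q * Matrix.diagonal d * Q⁻¹)
          = Q * Matrix.diagonal (fun k => d k ^ m) * (Q⁻¹ * Q) * Matrix.diagonal d * Q⁻¹ := by
            noncomm_ring
      _ = Q * (Matrix.diagonal (fun k => d k ^ m) * Matrix.diagonal d) * Q⁻¹ := by
            rw [hQQ']; noncomm_ring
      _ = Q * Matrix.diagonal (fun k => d k ^ (m+1)) * Q⁻¹ := by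
            rw [Matrix.diagonal_mul_diagonal]
            simp [pow_succ]
  -- eigenvalue bound
  have habs : ∀ k, ‖d k‖ ≤ 1 := by
    intro k
    have hcolnz : (fun j => Q j k) ≠ 0 := by
      intro hz
      have h1 : Q.mulVec (Pi.single k 1) = 0 := by
        rw [Matrix.mulVec_single]
        funext j
        simpa using congrFun hz j
      have h2 : (Pi.single k 1 : Fin n → ℂ) = 0 := by
        have h3 := congrArg (fun u => Q⁻¹.mulVec u) h1
        simp only [Matrix.mulVec_zero] at h3
        rwa [Matrix.mulVec_mulVec, hQQ', Matrix.one_mulVec] at h3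
      simpa using congrFun h2 k
    obtain ⟨j1, hj1⟩ : ∃ j, Q j k ≠ 0 := by
      by_contra h
      push_neg at h
      exact hcolnz (funext fun j => h j)
    obtain ⟨j0, -, hj0⟩ := Finset.exists_max_image Finset.univ
      (fun j => ‖Q j k‖) ⟨j1, Finset.mem_univ _⟩
    have hj0pos : 0 < ‖Q j0 k‖ :=
      lt_of_lt_of_le (norm_pos_iff.mpr hj1) (hj0 j1 (Finset.mem_univ _))
    have heig : ∑ l, Mc j0 l * Q l k = d k * Q j0 k := by
      have := congrFun (congrFun hMcQ j0) k
      rw [Matrix.mul_apply, Matrix.mul_diagonal] at this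
      rw [this]; ring
    have hMcabs : ∀ j l, ‖Mc j l‖ = M j l := by
      intro j l
      rw [hMc]
      simp only [Matrix.map_apply]
      rw [show (algebraMap ℝ ℂ) (M j l) = ((M j l : ℝ) : ℂ) from rfl, Complex.norm_of_nonneg (hMnonneg j l)]
    have hbound : ‖d k‖ * ‖Q j0 k‖ ≤ ‖Q j0 k‖ := by
      calc ‖d k‖ * ‖Q j0 k‖ = ‖d k * Q j0 k‖ :=
            (norm_mul _ _).symm
      _ = ‖∑ l, Mc j0 l * Q l k‖ := by rw [heig]
      _ ≤ ∑ l, ‖Mc j0 l * Q l k‖ := norm_sum_le _ _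
      _ = ∑ l, M j0 l * ‖Q l k‖ := by
            refine Finset.sum_congr rfl fun l _ => ?_
            rw [norm_mul, hMcabs]
      _ ≤ ∑ l, M j0 l * ‖Q j0 k‖ := by
            refine Finset.sum_le_sum fun l _ => ?_
            exact mul_le_mul_of_nonneg_left (hj0 l (Finset.mem_univ _)) (hMnonneg j0 l)
      _ = ‖Q j0 k‖ := by rw [← Finset.sum_mul, hrow, one_mul]
    exact le_of_mul_le_mul_right (by simpa using hbound) hj0pos
  -- complex vectors
  set Pc : Fin n → ℂ := fun i => (P i : ℂ) with hPc
  set w : Fin n → ℂ := Q⁻¹.mulVec Pc with hw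
  set e : Fin n → ℂ := fun k => if d k = 1 then 1 else 0 with he
  set v : Fin n → ℂ := fun i => ∑ k, Q i k * (e k * w k) with hv
  have hentry : ∀ (m : ℕ) (i : Fin n),
      ((Mc ^ m).mulVec Pc) i = ∑ k, Q i k * (d k ^ m * w k) := by
    intro m i
    rw [hMcpow m, ← Matrix.mulVec_mulVec, ← Matrix.mulVec_mulVec]
    show Q.mulVec ((Matrix.diagonal fun k => d k ^ m).mulVec w) i = _
    rw [show ((Matrix.diagonal fun k => d k ^ m).mulVec w) = fun k => d k ^ m * w k from
      funext fun k => Matrix.mulVec_diagonal _ _ _]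
    simp [Matrix.mulVec, dotProduct]
  -- Cesàro per-entry tendsto
  have htend : ∀ i : Fin n,
      Tendsto (fun N : ℕ => (1 / N : ℂ) * ∑ m ∈ Finset.Icc 1 N, ((Mc ^ m).mulVec Pc) i)
        atTop (nhds (v i)) := by
    intro i
    have hrw : ∀ N : ℕ, (1 / N : ℂ) * ∑ m ∈ Finset.Icc 1 N, ((Mc ^ m).mulVec Pc) i
        = ∑ k, Q i k * w k * ((1 / N : ℂ) * ∑ m ∈ Finset.Icc 1 N, d k ^ m) := by
      intro N
      simp only [hentry]
      rw [Finset.sum_comm, Finset.mul_sum]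
      refine Finset.sum_congr rfl fun k _ => ?_
      simp only [Finset.mul_sum]
      exact Finset.sum_congr rfl fun m _ => by ring
    simp only [hrw]
    have : v i = ∑ k, Q i k * w k * e k := by
      rw [hv]
      exact Finset.sum_congr rfl fun k _ => by ring
    rw [this]
    refine tendsto_finset_sum _ fun k _ => ?_
    have hck := Filter.Tendsto.const_mul (b := Q i k * w k) (cesaro_geom (d k) (habs k))
    simpa [he] using hck
  -- v is fixed by Mc
  have hfixv : Mc.mulVec v = v := by
    have hu : v = Q.mulVec (fun k => e k * w k) := by
      funext i
      simp only [hv, Matrix.mulVec, dotProduct]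
    have hdiagu : (Matrix.diagonal d).mulVec (fun k => e k * w k) = fun k => e k * w k := by
      funext k
      rw [Matrix.mulVec_diagonal]
      by_cases hk : d k = 1 <;> simp [he, hk]
    rw [hu, Matrix.mulVec_mulVec, hMcQ, ← Matrix.mulVec_mulVec, hdiagu]
  obtain ⟨c, hc⟩ := hfix v hfixv
  -- sum preservation
  have hcolc : ∀ j, ∑ i, Mc i j = 1 := by
    intro j
    rw [hMc]
    have hmm : ∀ i, (M.map (algebraMap ℝ ℂ)) i j = ((M i j : ℝ) : ℂ) := fun i => rfl
    simp only [hmm]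
    rw [← Complex.ofReal_sum, hcol j, Complex.ofReal_one]
  have hsumvec : ∀ (u : Fin n → ℂ), ∑ i, (Mc.mulVec u) i = ∑ i, u i := by
    intro u
    simp only [Matrix.mulVec, dotProduct]
    rw [Finset.sum_comm]
    refine Finset.sum_congr rfl fun j _ => ?_
    rw [← Finset.sum_mul, hcolc, one_mul]
  have hsum_pow : ∀ m : ℕ, ∑ i, ((Mc ^ m).mulVec Pc) i = 1 := by
    intro m
    induction m with
    | zero =>
      simp only [pow_zero, Matrix.one_mulVec]
      rw [hPc, ← Complex.ofReal_sum, hPsum, Complex.ofReal_one]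
    | succ m ih =>
      rw [pow_succ', ← Matrix.mulVec_mulVec, hsumvec, ih]
  -- ∑ v = 1
  have hvsum : ∑ i, v i = 1 := by
    have h1 : Tendsto (fun N : ℕ => ∑ i, ((1 / N : ℂ) * ∑ m ∈ Finset.Icc 1 N,
        ((Mc ^ m).mulVec Pc) i)) atTop (nhds (∑ i, v i)) :=
      tendsto_finset_sum _ fun i _ => htend i
    have h2 : (fun _ : ℕ => (1:ℂ)) =ᶠ[atTop] fun N : ℕ => ∑ i, ((1 / N : ℂ) *
        ∑ m ∈ Finset.Icc 1 N, ((Mc ^ m).mulVec Pc) i) := by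
      filter_upwards [eventually_ge_atTop 1] with N hN
      have hN0 : (N : ℂ) ≠ 0 := by exact_mod_cast Nat.one_le_iff_ne_zero.mp hN
      rw [← Finset.mul_sum, Finset.sum_comm]
      rw [show ∑ m ∈ Finset.Icc 1 N, ∑ i, ((Mc ^ m).mulVec Pc) i
          = ∑ m ∈ Finset.Icc 1 N, (1:ℂ) from Finset.sum_congr rfl fun m _ => hsum_pow m]
      simp [Nat.card_Icc, one_div, hN0]
    have h4 : Tendsto (fun N : ℕ => ∑ i, ((1 / N : ℂ) *
        ∑ m ∈ Finset.Icc 1 N, ((Mc ^ m).mulVec Pc) i)) atTop (nhds 1) :=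
      Tendsto.congr' h2 tendsto_const_nhds
    exact tendsto_nhds_unique h1 h4
  have hcval : c = 1 / (n : ℂ) := by
    have : ∑ i : Fin n, v i = n * c := by
      rw [hc]
      simp [Finset.sum_const, Finset.card_univ]
    rw [hvsum] at this
    have hn0 : (n : ℂ) ≠ 0 := by
      exact_mod_cast hn.ne'
    field_simp
    linear_combination -this
  -- real/complex compatibility
  have hcast : ∀ (m : ℕ) (i : Fin n), (((M ^ m).mulVec P) i : ℂ) = ((Mc ^ m).mulVec Pc) i := by
    intro m i
    have hpow : Mc ^ m = (M ^ m).map (algebraMap ℝ ℂ) := by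
      rw [hMc, ← RingHom.mapMatrix_apply, ← RingHom.mapMatrix_apply, ← map_pow]
    rw [hpow]
    simp only [Matrix.mulVec, dotProduct, Matrix.map_apply, hPc]
    push_cast
    rfl
  -- finish
  rw [tendsto_pi_nhds]
  intro i
  have hre : Tendsto (fun N : ℕ => ((1 / N : ℝ) * ∑ m ∈ Finset.Icc 1 N,
      ((M ^ m).mulVec P) i)) atTop (nhds ((1:ℝ) / n)) := by
    have hcastN : ∀ N : ℕ, (((1 / N : ℝ) * ∑ m ∈ Finset.Icc 1 N, ((M ^ m).mulVec P) i : ℝ) : ℂ)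
        = (1 / N : ℂ) * ∑ m ∈ Finset.Icc 1 N, ((Mc ^ m).mulVec Pc) i := by
      intro N
      push_cast
      rw [Finset.sum_congr rfl fun m _ => hcast m i]
    have h1 : Tendsto (fun N : ℕ => (((1 / N : ℝ) * ∑ m ∈ Finset.Icc 1 N,
        ((M ^ m).mulVec P) i : ℝ) : ℂ)) atTop (nhds (v i)) :=
      (htend i).congr fun N => (hcastN N).symm
    have h2 := (Complex.continuous_re.tendsto (v i)).comp h1
    have h3 : v i = ((1:ℝ)/n : ℝ) := by
      rw [hc]
      show c = _
      rw [hcval]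
      push_cast
      ring
    rw [h3] at h2
    simpa only [Function.comp_def, Complex.ofReal_re] using h2
  convert hre using 2 with N
  simp [Finset.sum_apply, Pi.smul_apply, smul_eq_mul]
end
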